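/- Define h₊ : ℝ → ℝ by h₊(x) = (1/3)·√(45x² + 24√5·x + 19 + 2·|3x+√5|·√(45x² + 18√5·x + 14)) (both inner expressions are nonnegative for all real x, so h₊ is well defined). Then: Im P(x + i·h₊(x)) = 0 for every real x; h₊(−√5/3) = 2/3, so x = −√5/3 gives the point c₊; and the left-hand derivative of h₊ at −√5/3, i.e. the limit of (h₊(x) − 2/3)/(x + √5/3) as x → −√5/3 from the left, equals −(3+√5)/2 (the slope of ℓ₊, so the curve y = h₊(x) is tangent to ℓ₊ at c₊). -/

import Mathlib

/-!
Write `A x = 45x² + 24√5 x + 19` and `Q x = 45x² + 18√5 x + 14`. Expanding,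
`Im P(x + iy) = y · ((y² - A x / 9)² - 4 (3x + √5)² Q x / 81)`,
and `h₊` is the root with `h₊(x)² = (A x + 2 |3x + √5| √(Q x)) / 9`, so it kills the second
factor.
At `c = -√5/3` the radicand of `h₊` equals `4`, and for `x < c` it equals
`4 + (x - c) (45x + 9√5 - 6 √(Q x))`; rationalising `√radicand - 2` turns the left difference
quotient of `h₊` into a function continuous at `c`, whose value there is `-(3 + √5)/2`.
-/

open Complex

/-- The polynomial `P(z) = z (1 + (2√5/3) z + z²)²`. -/
noncomputable def P (z : ℂ) : ℂ :=
  z * (1 + ((2 * Real.sqrt 5 / 3 : ℝ) : ℂ) * z + z ^ 2) ^ 2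

/-- `h₊(x) = (1/3)·√(45x² + 24√5 x + 19 + 2|3x+√5|·√(45x² + 18√5 x + 14))`. -/
noncomputable def hplus (x : ℝ) : ℝ :=
  1 / 3 * Real.sqrt (45 * x ^ 2 + 24 * Real.sqrt 5 * x + 19
    + 2 * |3 * x + Real.sqrt 5| * Real.sqrt (45 * x ^ 2 + 18 * Real.sqrt 5 * x + 14))

open Filter Topology

lemma sq_sqrt_five : √5 ^ 2 = (5 : ℝ) := Real.sq_sqrt (by norm_num)

noncomputable def hplusInner (x : ℝ) : ℝ := 45 * x ^ 2 + 18 * √5 * x + 14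

noncomputable def hplusRadicand (x : ℝ) : ℝ :=
  45 * x ^ 2 + 24 * √5 * x + 19 + 2 * |3 * x + √5| * √(hplusInner x)

lemma hplusInner_nonneg (x : ℝ) : 0 ≤ hplusInner x := by
  have : hplusInner x = 45 * (x + √5 / 5) ^ 2 + 5 := by
    unfold hplusInner; linear_combination (-9 / 5 : ℝ) * sq_sqrt_five
  rw [this]; positivity

lemma hplusRadicand_nonneg (x : ℝ) : 0 ≤ hplusRadicand x := by
  have : 0 ≤ 45 * x ^ 2 + 24 * √5 * x + 19 := by
    nlinarith [sq_nonneg (x + 4 * √5 / 15), sq_sqrt_five]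
  unfold hplusRadicand; positivity

lemma hplus_eq (x : ℝ) : hplus x = 1 / 3 * √(hplusRadicand x) := rfl

lemma hplus_sq (x : ℝ) : hplus x ^ 2 = hplusRadicand x / 9 := by
  rw [hplus_eq, mul_pow, Real.sq_sqrt (hplusRadicand_nonneg x)]; ring

lemma im_P_ofReal_add_mul_I (x y : ℝ) :
    (P (x + y * I)).im =
      y * ((y ^ 2 - (45 * x ^ 2 + 24 * √5 * x + 19) / 9) ^ 2
        - 4 * (3 * x + √5) ^ 2 * hplusInner x / 81) := by
  simp only [P, hplusInner, pow_succ, pow_zero, one_mul, mul_im, mul_re, add_im, add_re,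
    ofReal_re, ofReal_im, I_re, I_im, one_re, one_im]
  linear_combination (16 / 9 * x ^ 2 * y + 8 / 9 * x * y * √5 - 4 / 9 * y ^ 3 + 56 / 81 * y)
    * sq_sqrt_five

lemma im_P_hplus (x : ℝ) : (P (x + hplus x * I)).im = 0 := by
  have hsq : (hplus x ^ 2 - (45 * x ^ 2 + 24 * √5 * x + 19) / 9) ^ 2
      = 4 * (3 * x + √5) ^ 2 * hplusInner x / 81 := by
    rw [hplus_sq, hplusRadicand]
    linear_combination (4 * |3 * x + √5| ^ 2 / 81) * Real.sq_sqrt (hplusInner_nonneg x)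
      + (4 * hplusInner x / 81) * sq_abs (3 * x + √5)
  rw [im_P_ofReal_add_mul_I, hsq, sub_self, mul_zero]

lemma hplusInner_neg_sqrt_five_div_three : hplusInner (-√5 / 3) = 9 := by
  unfold hplusInner; linear_combination (-1 : ℝ) * sq_sqrt_five

lemma hplusRadicand_neg_sqrt_five_div_three : hplusRadicand (-√5 / 3) = 4 := by
  have : 3 * (-√5 / 3) + √5 = 0 := by ring
  unfold hplusRadicand; rw [this, abs_zero]; linear_combination (-3 : ℝ) * sq_sqrt_five

lemma sqrt_hplusInner_neg_sqrt_five_div_three : √(hplusInner (-√5 / 3)) = 3 := by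
  rw [hplusInner_neg_sqrt_five_div_three, show (9 : ℝ) = 3 ^ 2 by norm_num,
    Real.sqrt_sq (by norm_num)]

lemma sqrt_hplusRadicand_neg_sqrt_five_div_three : √(hplusRadicand (-√5 / 3)) = 2 := by
  rw [hplusRadicand_neg_sqrt_five_div_three, show (4 : ℝ) = 2 ^ 2 by norm_num,
    Real.sqrt_sq (by norm_num)]

lemma hplus_neg_sqrt_five_div_three : hplus (-√5 / 3) = 2 / 3 := by
  rw [hplus_eq, sqrt_hplusRadicand_neg_sqrt_five_div_three]; norm_num

lemma hplusRadicand_sub_four_of_lt {x : ℝ} (hx : x < -√5 / 3) :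
    hplusRadicand x - 4 = (x + √5 / 3) * (45 * x + 9 * √5 - 6 * √(hplusInner x)) := by
  rw [hplusRadicand, abs_of_neg (by linarith)]
  linear_combination (-3 : ℝ) * sq_sqrt_five

/-- Left of `-√5/3` this is the difference quotient of `h₊` there, with `√radicand - 2`
rationalised. -/
noncomputable def hplusLeftDiffQuot (x : ℝ) : ℝ :=
  (45 * x + 9 * √5 - 6 * √(hplusInner x)) / (3 * (√(hplusRadicand x) + 2))

lemma hplus_sub_div_eq_hplusLeftDiffQuot {x : ℝ} (hx : x < -√5 / 3) :
    (hplus x - 2 / 3) / (x + √5 / 3) = hplusLeftDiffQuot x := by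
  have hden : 3 * (√(hplusRadicand x) + 2) ≠ 0 := by positivity
  have hx' : x + √5 / 3 ≠ 0 := by linarith
  rw [hplusLeftDiffQuot, hplus_eq, div_eq_div_iff hx' hden]
  linear_combination Real.sq_sqrt (hplusRadicand_nonneg x) + hplusRadicand_sub_four_of_lt hx

lemma continuous_hplusInner : Continuous hplusInner := by
  unfold hplusInner; fun_prop

lemma continuous_hplusRadicand : Continuous hplusRadicand := by
  unfold hplusRadicand; have := continuous_hplusInner; fun_prop

lemma continuous_hplusLeftDiffQuot : Continuous hplusLeftDiffQuot := by
  unfold hplusLeftDiffQuot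
  have := continuous_hplusInner; have := continuous_hplusRadicand
  exact Continuous.div (by fun_prop) (by fun_prop) fun x ↦ by positivity

lemma hplusLeftDiffQuot_neg_sqrt_five_div_three :
    hplusLeftDiffQuot (-√5 / 3) = -(3 + √5) / 2 := by
  rw [hplusLeftDiffQuot, sqrt_hplusInner_neg_sqrt_five_div_three,
    sqrt_hplusRadicand_neg_sqrt_five_div_three]
  ring

lemma tendsto_hplus_sub_div_nhdsLT :
    Tendsto (fun x ↦ (hplus x - 2 / 3) / (x + √5 / 3)) (𝓝[<] (-√5 / 3))
      (𝓝 (-(3 + √5) / 2)) := by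
  rw [← hplusLeftDiffQuot_neg_sqrt_five_div_three]
  refine (continuous_hplusLeftDiffQuot.continuousWithinAt.tendsto).congr' ?_
  filter_upwards [self_mem_nhdsWithin] with x hx
  exact (hplus_sub_div_eq_hplusLeftDiffQuot hx).symm

theorem stmt5 :
    (∀ x : ℝ, 0 ≤ 45 * x ^ 2 + 18 * Real.sqrt 5 * x + 14) ∧
    (∀ x : ℝ, 0 ≤ 45 * x ^ 2 + 24 * Real.sqrt 5 * x + 19
        + 2 * |3 * x + Real.sqrt 5| * Real.sqrt (45 * x ^ 2 + 18 * Real.sqrt 5 * x + 14)) ∧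
    (∀ x : ℝ, (P ((x : ℂ) + (hplus x : ℂ) * I)).im = 0) ∧
    hplus (-Real.sqrt 5 / 3) = 2 / 3 ∧
    Filter.Tendsto (fun x : ℝ => (hplus x - 2 / 3) / (x + Real.sqrt 5 / 3))
      (nhdsWithin (-Real.sqrt 5 / 3) (Set.Iio (-Real.sqrt 5 / 3)))
      (nhds (-(3 + Real.sqrt 5) / 2)) :=
  ⟨hplusInner_nonneg, hplusRadicand_nonneg, im_P_hplus, hplus_neg_sqrt_five_div_three,
    tendsto_hplus_sub_div_nhdsLT⟩
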